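/- arXiv:2212.05495 — 4 statements merged into one kernel-verified Lean document; each statement's English description precedes it below -/
import Mathlib

section
/- Let K be a finite set of paths, f : K → ℝ with f_k ≥ 0 for all k, C : K → ℝ, and μ > 0. If φ(f) is not identically zero on K, then there exists k ∈ K with f_k > 0 and φ_k(f) < 0. In particular, the index set { k ∈ K : f_k ≠ 0 and φ_k(f) ≤ 0 } over which the maximal relative step h is taken is nonempty, and h > 0. -/
/-- The flow-swap (descent-direction) function of the Modified Wang's algorithm:
`φ_k(f) = ∑_{g ∈ K} [ f_g · (max(C_g − C_k, 0))^μ − f_k · (max(C_k − C_g, 0))^μ ]`. -/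
noncomputable def phi {K : Type*} [Fintype K] (f C : K → ℝ) (μ : ℝ) (k : K) : ℝ :=
  ∑ g, (f g * (max (C g - C k) 0) ^ μ - f k * (max (C k - C g) 0) ^ μ)

/-- The maximal relative step `h = max { (−φ_k(f))/f_k : f_k ≠ 0, φ_k(f) ≤ 0 }`. -/
noncomputable def hstep {K : Type*} [Fintype K] (f C : K → ℝ) (μ : ℝ) : ℝ :=
  sSup ((fun k => -phi f C μ k / f k) '' {k | f k ≠ 0 ∧ phi f C μ k ≤ 0})

lemma sum_phi_eq_zero {K : Type*} [Fintype K] (f C : K → ℝ) (μ : ℝ) :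
    ∑ k, phi f C μ k = 0 := by
  have : ∑ k, phi f C μ k =
      (∑ k, ∑ g, f g * (max (C g - C k) 0) ^ μ)
        - (∑ k, ∑ g, f k * (max (C k - C g) 0) ^ μ) := by
    simp [phi, Finset.sum_sub_distrib]
  rw [this, Finset.sum_comm, sub_self]

/-- If `φ(f)` is not identically zero on `K`, then some path has positive flow and
strictly negative flow-swap value; in particular the index set over which the maximal
relative step `h` is taken is nonempty, and `h > 0`. -/
theorem exists_pos_flow_neg_phi_and_hstep_pos
    {K : Type*} [Fintype K] (f C : K → ℝ) (μ : ℝ) (hμ : 0 < μ)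
    (hf : ∀ k, 0 ≤ f k) (hphi : ¬ ∀ k, phi f C μ k = 0) :
    (∃ k, 0 < f k ∧ phi f C μ k < 0) ∧
      {k | f k ≠ 0 ∧ phi f C μ k ≤ 0}.Nonempty ∧
      0 < hstep f C μ := by
  classical
  -- there is some k with φ_k < 0
  obtain ⟨k, hk⟩ : ∃ k, phi f C μ k < 0 := by
    by_contra h
    push_neg at h
    apply hphi
    have := (Finset.sum_eq_zero_iff_of_nonneg
      (fun k _ => h k)).mp (sum_phi_eq_zero f C μ)
    exact fun k => this k (Finset.mem_univ k)
  -- f k > 0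
  have hfk : 0 < f k := by
    rcases lt_or_eq_of_le (hf k) with h | h
    · exact h
    · exfalso
      have : 0 ≤ phi f C μ k := by
        apply Finset.sum_nonneg
        intro g _
        have h1 : 0 ≤ f g * (max (C g - C k) 0) ^ μ :=
          mul_nonneg (hf g) (Real.rpow_nonneg (le_max_right _ _) μ)
        rw [← h]
        simpa using h1
      linarith
  refine ⟨⟨k, hfk, hk⟩, ⟨k, hfk.ne', hk.le⟩, ?_⟩
  have hmem : (-phi f C μ k / f k) ∈
      ((fun k => -phi f C μ k / f k) '' {k | f k ≠ 0 ∧ phi f C μ k ≤ 0}) :=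
    ⟨k, ⟨hfk.ne', hk.le⟩, rfl⟩
  have hbdd : BddAbove ((fun k => -phi f C μ k / f k) ''
      {k | f k ≠ 0 ∧ phi f C μ k ≤ 0}) :=
    (Set.toFinite _).bddAbove
  have hpos : 0 < -phi f C μ k / f k := div_pos (by linarith) hfk
  exact lt_of_lt_of_le hpos (le_csSup hbdd hmem)
end

section
/- Let K be a finite set of paths, f : K → ℝ with f_k ≥ 0 for all k, C : K → ℝ, and μ > 0. Suppose φ(f) is not identically zero, so that h > 0 is well defined. Then for every step size β with 0 ≤ β ≤ 1/h, the updated flow f'_k = f_k + β·φ_k(f) satisfies f'_k ≥ 0 for all k ∈ K and ∑_{k ∈ K} f'_k = ∑_{k ∈ K} f_k; i.e., the update remains a feasible flow with the same total demand. -/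
lemma phi_nonneg_of_fzero {K : Type*} [Fintype K] (f C : K → ℝ) (μ : ℝ)
    (hf : ∀ k, 0 ≤ f k) {k : K} (h : f k = 0) : 0 ≤ phi f C μ k := by
  unfold phi
  rw [Finset.sum_congr rfl (fun g _ => by rw [h, zero_mul, sub_zero])]
  exact Finset.sum_nonneg fun g _ =>
    mul_nonneg (hf g) (Real.rpow_nonneg (le_max_right _ _) μ)

/-- If `φ(f)` is not identically zero (so `h > 0` is well defined), then for every step
size `0 ≤ β ≤ 1/h`, the updated flow `f'_k = f_k + β·φ_k(f)` is nonnegative and has the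
same total demand: the update remains a feasible flow. -/
theorem update_feasible_of_step_le_inv_hstep
    {K : Type*} [Fintype K] (f C : K → ℝ) (μ : ℝ) (hμ : 0 < μ)
    (hf : ∀ k, 0 ≤ f k) (hphi : ¬ ∀ k, phi f C μ k = 0) :
    ∀ β : ℝ, 0 ≤ β → β ≤ 1 / hstep f C μ →
      (∀ k, 0 ≤ f k + β * phi f C μ k) ∧
        ∑ k, (f k + β * phi f C μ k) = ∑ k, f k := by
  intro β hβ0 hβ
  have hsum0 := sum_phi_eq_zero f C μ
  have hbdd : BddAbove ((fun k => -phi f C μ k / f k) '' {k | f k ≠ 0 ∧ phi f C μ k ≤ 0}) :=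
    ((Set.toFinite _).image _).bddAbove
  -- there is some k0 with phi k0 < 0
  obtain ⟨k0, hk0⟩ : ∃ k, phi f C μ k < 0 := by
    by_contra hcon
    push_neg at hcon
    exact hphi (fun k => (Finset.sum_eq_zero_iff_of_nonneg
      (fun g _ => hcon g)).mp hsum0 k (Finset.mem_univ k))
  have hfk0 : f k0 ≠ 0 := fun h =>
    absurd hk0 (not_lt.mpr (phi_nonneg_of_fzero f C μ hf h))
  have hfk0pos : 0 < f k0 := lt_of_le_of_ne (hf k0) (Ne.symm hfk0)
  have hhpos : 0 < hstep f C μ := by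
    have hmem : -phi f C μ k0 / f k0 ∈
        ((fun k => -phi f C μ k / f k) '' {k | f k ≠ 0 ∧ phi f C μ k ≤ 0}) :=
      ⟨k0, ⟨hfk0, le_of_lt hk0⟩, rfl⟩
    have := le_csSup hbdd hmem
    have hpos : 0 < -phi f C μ k0 / f k0 := div_pos (by linarith) hfk0pos
    exact lt_of_lt_of_le hpos this
  have hβh : β * hstep f C μ ≤ 1 := by
    rw [div_eq_mul_inv, one_mul] at hβ
    calc β * hstep f C μ ≤ (hstep f C μ)⁻¹ * hstep f C μ :=
          mul_le_mul_of_nonneg_right hβ (le_of_lt hhpos)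
      _ = 1 := inv_mul_cancel₀ (ne_of_gt hhpos)
  refine ⟨fun k => ?_, ?_⟩
  · by_cases hpk : 0 ≤ phi f C μ k
    · exact add_nonneg (hf k) (mul_nonneg hβ0 hpk)
    · push_neg at hpk
      have hfk : f k ≠ 0 := fun h =>
        absurd hpk (not_lt.mpr (phi_nonneg_of_fzero f C μ hf h))
      have hfkpos : 0 < f k := lt_of_le_of_ne (hf k) (Ne.symm hfk)
      have hle : -phi f C μ k / f k ≤ hstep f C μ :=
        le_csSup hbdd ⟨k, ⟨hfk, le_of_lt hpk⟩, rfl⟩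
      have h1 : -phi f C μ k ≤ hstep f C μ * f k := (div_le_iff₀ hfkpos).mp hle
      nlinarith [mul_le_mul_of_nonneg_left h1 hβ0,
        mul_le_mul_of_nonneg_right hβh (hf k)]
  · rw [Finset.sum_add_distrib, ← Finset.mul_sum, hsum0, mul_zero, add_zero]
end

section
/- Let K be a nonempty finite set of paths, f : K → ℝ with f_k ≥ 0 for all k, C : K → ℝ, and μ > 0. Then φ_k(f) = 0 for every k ∈ K if and only if every path with positive flow attains the minimum cost, i.e., for every g ∈ K with f_g > 0 one has C_g = min_{l ∈ K} C_l. (Thus the zeros of the flow-swap map are exactly the Wardrop-equilibrium flows.) -/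
/-- The flow-swap function vanishes identically if and only if every path carrying
positive flow attains the minimum cost: the zeros of the flow-swap map are exactly
the Wardrop-equilibrium flows. -/
theorem phi_eq_zero_iff_wardrop
    {K : Type*} [Fintype K] [Nonempty K] (f C : K → ℝ) (μ : ℝ) (hμ : 0 < μ)
    (hf : ∀ k, 0 ≤ f k) :
    (∀ k, phi f C μ k = 0) ↔
      ∀ g, 0 < f g → C g = Finset.univ.inf' Finset.univ_nonempty C := by
  set m := Finset.univ.inf' Finset.univ_nonempty C with hm
  have hmle : ∀ g : K, m ≤ C g := fun g =>
    Finset.inf'_le _ (Finset.mem_univ g)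
  constructor
  · intro h g hg
    obtain ⟨k, -, hk⟩ := Finset.exists_mem_eq_inf' Finset.univ_nonempty C
    have hCk : C k = m := hk.symm
    have hzero : ∀ l : K, max (C k - C l) 0 = 0 := fun l =>
      max_eq_right (by linarith [hmle l])
    have hφ : phi f C μ k = ∑ l, f l * (max (C l - C k) 0) ^ μ := by
      unfold phi
      refine Finset.sum_congr rfl fun l _ => ?_
      rw [hzero l, Real.zero_rpow hμ.ne', mul_zero, sub_zero]
    have hsum : ∑ l, f l * (max (C l - C k) 0) ^ μ = 0 := by
      rw [← hφ]; exact h k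
    have hterm : f g * (max (C g - C k) 0) ^ μ = 0 := by
      have := Finset.sum_eq_zero_iff_of_nonneg
        (fun l _ => mul_nonneg (hf l) (Real.rpow_nonneg (le_max_right _ _) μ))
        |>.mp hsum g (Finset.mem_univ g)
      exact this
    have hpow : (max (C g - C k) 0) ^ μ = 0 := by
      rcases mul_eq_zero.mp hterm with h1 | h1
      · exact absurd h1 hg.ne'
      · exact h1
    have hmax : max (C g - C k) 0 = 0 := by
      by_contra hne
      have hpos : 0 < max (C g - C k) 0 :=
        lt_of_le_of_ne (le_max_right _ _) (Ne.symm hne)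
      exact (Real.rpow_pos_of_pos hpos μ).ne' hpow
    have : C g ≤ C k := by
      by_contra hlt
      push_neg at hlt
      have : max (C g - C k) 0 = C g - C k := max_eq_left (by linarith)
      linarith [hmax ▸ this]
    linarith [hmle g, hCk ▸ this]
  · intro h k
    unfold phi
    refine Finset.sum_eq_zero fun l _ => ?_
    have h1 : f l * (max (C l - C k) 0) ^ μ = 0 := by
      rcases (hf l).lt_or_eq with hl | hl
      · have hCl : C l = m := h l hl
        rw [max_eq_right (by linarith [hmle k]), Real.zero_rpow hμ.ne', mul_zero]
      · rw [← hl, zero_mul]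
    have h2 : f k * (max (C k - C l) 0) ^ μ = 0 := by
      rcases (hf k).lt_or_eq with hk | hk
      · have hCk : C k = m := h k hk
        rw [max_eq_right (by linarith [hmle l]), Real.zero_rpow hμ.ne', mul_zero]
      · rw [← hk, zero_mul]
    rw [h1, h2, sub_zero]
end

section
/- Let K be a nonempty finite set of paths, q > 0, σ > 0, and c, H : K → ℝ. Suppose f : K → ℝ with f_k ≥ 0 for all k and ∑_{k ∈ K} f_k = q, together with u ∈ ℝ, satisfies the stochastic-user-equilibrium complementarity conditions: for every k ∈ K, if f_k > 0 then C_k(f) = u, and if f_k = 0 then the condition C_k(f) ≥ u fails in the limit sense (C_k(f) → −∞ as f_k → 0+), so no path can carry zero flow. Then f_k > 0 for all k, C_k(f) = u for all k, and consequently f_k = q · exp(H_k − c_k/σ) / ∑_{l ∈ K} exp(H_l − c_l/σ) with u = −σ · ln( ∑_{l ∈ K} exp(H_l − c_l/σ) ). In particular, every complementarity solution of the regular-vehicle assignment assigns strictly positive flow to every path and coincides with the cross-nested-logit share formula. -/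
/-- The perceived travel cost of path `k` with the `−∞` interpretation at zero flow:
`C_k(f) = c_k − σ·H_k + σ·ln(f_k/q)` if `f_k ≠ 0`, and `⊥` (i.e. `−∞`) if `f_k = 0`. -/
noncomputable def percCost {K : Type*} (q σ : ℝ) (c H : K → ℝ) (f : K → ℝ) (k : K) :
    EReal :=
  if f k = 0 then ⊥ else ((c k - σ * H k + σ * Real.log (f k / q) : ℝ) : EReal)

/-- Any solution `(f, u)` of the stochastic-user-equilibrium complementarity system
(with perceived cost `−∞` at zero flow, so that `C_k(f) ≥ u` forces positive flow on
every path) has `f_k > 0` and `C_k(f) = u` for all `k`, and hence coincides with the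
cross-nested-logit share formula with `u = −σ·ln(∑_l exp(H_l − c_l/σ))`. -/
theorem complementarity_solution_is_logit_share
    {K : Type*} [Fintype K] [Nonempty K] (q σ : ℝ) (hq : 0 < q) (hσ : 0 < σ)
    (c H : K → ℝ) (f : K → ℝ) (u : ℝ)
    (hf : ∀ k, 0 ≤ f k) (hsum : (∑ k, f k) = q)
    (hge : ∀ k, (u : EReal) ≤ percCost q σ c H f k)
    (hcomp : ∀ k, f k * ((c k - σ * H k + σ * Real.log (f k / q)) - u) = 0) :
    (∀ k, 0 < f k) ∧
    (∀ k, c k - σ * H k + σ * Real.log (f k / q) = u) ∧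
    (f = fun k => q * Real.exp (H k - c k / σ) / ∑ l, Real.exp (H l - c l / σ)) ∧
    u = -σ * Real.log (∑ l, Real.exp (H l - c l / σ)) := by
  have hpos : ∀ k, 0 < f k := by
    intro k
    rcases lt_or_eq_of_le (hf k) with h | h
    · exact h
    · exfalso
      have := hge k
      rw [percCost, if_pos h.symm] at this
      exact (EReal.coe_ne_bot u) (le_bot_iff.mp this)
  have hC : ∀ k, c k - σ * H k + σ * Real.log (f k / q) = u := by
    intro k
    have := hcomp k
    have h0 : (c k - σ * H k + σ * Real.log (f k / q)) - u = 0 :=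
      (mul_eq_zero.mp this).resolve_left (ne_of_gt (hpos k))
    linarith
  have hfk : ∀ k, f k = q * Real.exp (u / σ) * Real.exp (H k - c k / σ) := by
    intro k
    have h := hC k
    have hlog : Real.log (f k / q) = u / σ + (H k - c k / σ) := by
      field_simp at h ⊢
      ring_nf at h ⊢
      linarith
    have hdiv : f k / q = Real.exp (u / σ + (H k - c k / σ)) := by
      rw [← hlog, Real.exp_log (div_pos (hpos k) hq)]
    rw [Real.exp_add] at hdiv
    rw [div_eq_iff (ne_of_gt hq)] at hdiv
    rw [hdiv]; ring
  set S := ∑ l, Real.exp (H l - c l / σ) with hS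
  have hSpos : 0 < S := Finset.sum_pos (fun l _ => Real.exp_pos _) Finset.univ_nonempty
  have hsum2 : q * Real.exp (u / σ) * S = q := by
    have : (∑ k, f k) = q * Real.exp (u / σ) * S := by
      rw [hS, Finset.mul_sum]
      exact Finset.sum_congr rfl fun k _ => hfk k
    rw [← this, hsum]
  have hexp : Real.exp (u / σ) = 1 / S := by
    have hq' : q ≠ 0 := ne_of_gt hq
    field_simp at hsum2 ⊢
    nlinarith [hsum2]
  have hu : u = -σ * Real.log S := by
    have h1 : u / σ = Real.log (1 / S) := by
      rw [← hexp, Real.log_exp]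
    rw [Real.log_div one_ne_zero (ne_of_gt hSpos), Real.log_one] at h1
    have hσ' : σ ≠ 0 := ne_of_gt hσ
    field_simp at h1
    linarith
  refine ⟨hpos, hC, ?_, hu⟩
  funext k
  rw [hfk k, hexp]
  field_simp
end
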